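/- Consider the action of K = SU(3) × SU(3) on the Cayley plane OP² (realized as rank-1 projectors among octonion-hermitian 3×3 matrices), where the first factor acts as Aut_ℂ(𝕆) ≅ SU(3) entrywise on matrix entries and the second factor acts by X ↦ gXg⁻¹. Then the orbit of the projector q = diag(0,0,1) is the complex projective plane ℂP² ⊆ OP² (the projectors with all entries in ℂ), and the stabilizer K_q is isomorphic to SU(3) × U(2), consisting of pairs (Y₁, diag-block(Y₂, y)) with Y₁ ∈ SU(3), Y₂ ∈ U(2), y = conj(det Y₂). -/

import Mathlib

/-! A minimal construction of the real Cayley (octonion) algebra `𝕆` via the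
Cayley–Dickson doubling of the quaternions, together with hermitian `3 × 3`
octonion matrices. -/

/-- The octonions, as pairs of quaternions (Cayley–Dickson construction). -/
structure Oct where
  a : Quaternion ℝ
  b : Quaternion ℝ

namespace Oct

def octEquiv : Oct ≃ (Quaternion ℝ × Quaternion ℝ) :=
  ⟨fun o => (o.a, o.b), fun p => ⟨p.1, p.2⟩, fun _ => rfl, fun _ => rfl⟩

noncomputable instance : AddCommGroup Oct := octEquiv.addCommGroup

/-- Cayley–Dickson multiplication. -/
noncomputable instance : Mul Oct :=
  ⟨fun x y => ⟨x.a * y.a - star y.b * x.b, y.b * x.a + x.b * star y.a⟩⟩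

noncomputable instance : One Oct := ⟨⟨1, 0⟩⟩

/-- Octonion conjugation. -/
noncomputable instance : Star Oct := ⟨fun x => ⟨star x.a, -x.b⟩⟩

/-- The canonical embedding of the reals. -/
noncomputable def ofReal (x : ℝ) : Oct := ⟨(x : Quaternion ℝ), 0⟩

/-- The imaginary unit `j`. -/
noncomputable def jO : Oct := ⟨⟨0, 0, 1, 0⟩, 0⟩

/-- The imaginary unit `ℓ`. -/
noncomputable def lO : Oct := ⟨0, 1⟩

/-- The real part of an octonion. -/
def re (x : Oct) : ℝ := x.a.re

end Oct

/-- Product of `3 × 3` octonion matrices. -/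
noncomputable def omul3 (X Y : Matrix (Fin 3) (Fin 3) Oct) : Matrix (Fin 3) (Fin 3) Oct :=
  Matrix.of fun i j => ∑ k : Fin 3, X i k * Y k j

/-- Trace of a `3 × 3` octonion matrix. -/
noncomputable def otrace (X : Matrix (Fin 3) (Fin 3) Oct) : Oct := ∑ i : Fin 3, X i i

/-- Hermitian octonion matrices. -/
def IsOHerm (X : Matrix (Fin 3) (Fin 3) Oct) : Prop := ∀ i j, X j i = star (X i j)

/-- The euclidean inner product `⟨X, Y⟩ = Re trace (X Y)` on octonion matrices. -/
noncomputable def oinner (X Y : Matrix (Fin 3) (Fin 3) Oct) : ℝ :=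
  ∑ i : Fin 3, ∑ j : Fin 3, Oct.re (X i j * Y j i)

/-- The embedding `ℂ → 𝕆` onto the distinguished complex subfield. -/
noncomputable def embC (zc : ℂ) : Oct := ⟨⟨zc.re, zc.im, 0, 0⟩, 0⟩

/-- The `ℂ`-coordinate of an octonion along `1` (w.r.t. the basis `(1, j, ℓ, jℓ)` of
`𝕆` as a complex vector space). -/
def coord0 (u : Oct) : ℂ := ⟨u.a.re, u.a.imI⟩

/-- The `ℂ`-coordinates of an octonion along `(j, ℓ, jℓ)`. -/
noncomputable def coords (u : Oct) : Fin 3 → ℂ :=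
  ![⟨u.a.imJ, -u.a.imK⟩, ⟨u.b.re, -u.b.imI⟩, ⟨u.b.imJ, u.b.imK⟩]

/-- The octonion with given complex coordinates w.r.t. the basis `(1, j, ℓ, jℓ)`. -/
noncomputable def ofCoords (z0 : ℂ) (w : Fin 3 → ℂ) : Oct :=
  ⟨⟨z0.re, z0.im, (w 0).re, -(w 0).im⟩, ⟨(w 1).re, -(w 1).im, (w 2).re, (w 2).im⟩⟩

/-- The action of a complex `3 × 3` matrix (e.g. an element of
`SU(3) ≅ Aut_ℂ(𝕆)`) on an octonion, acting on the coordinates along `(j, ℓ, jℓ)` and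
fixing the complex subfield. -/
noncomputable def actAut (Y : Matrix (Fin 3) (Fin 3) ℂ) (u : Oct) : Oct :=
  ofCoords (coord0 u) (Y.mulVec (coords u))

/-- Entrywise embedding of complex matrices into octonion matrices. -/
noncomputable def embCM (Y : Matrix (Fin 3) (Fin 3) ℂ) : Matrix (Fin 3) (Fin 3) Oct :=
  Matrix.of fun i j => embC (Y i j)

/-- The action of `(Y₁, Y₂) ∈ SU(3) × SU(3)` on octonion matrices: `Y₁` acts entrywise
as a complex-linear automorphism of `𝕆` and `Y₂` by conjugation `X ↦ (Y₂ X) Y₂⁻¹`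
(with `Y₂⁻¹ = Y₂ᴴ` for unitary `Y₂`). -/
noncomputable def cayleyAct (Y₁ Y₂ : Matrix (Fin 3) (Fin 3) ℂ)
    (X : Matrix (Fin 3) (Fin 3) Oct) : Matrix (Fin 3) (Fin 3) Oct :=
  Matrix.of fun i j => actAut Y₁ ((omul3 (omul3 (embCM Y₂) X) (embCM (Matrix.conjTranspose Y₂))) i j)

/-- The Cayley plane `OP²`: idempotent hermitian `3 × 3` octonion matrices of trace 1
(rank-1 projectors). -/
def OP2 : Set (Matrix (Fin 3) (Fin 3) Oct) :=
  {X | IsOHerm X ∧ omul3 X X = X ∧ otrace X = 1}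

/-- The complex projective plane inside `OP²`: the projectors with complex entries. -/
def CP2 : Set (Matrix (Fin 3) (Fin 3) Oct) :=
  {X | X ∈ OP2 ∧ ∀ i j, ∃ zc : ℂ, X i j = embC zc}

/-- The base point `q = diag(0, 0, 1)`. -/
noncomputable def qProj : Matrix (Fin 3) (Fin 3) Oct :=
  Matrix.of fun i j => if i = (2 : Fin 3) ∧ j = (2 : Fin 3) then 1 else 0

/-- The block diagonal `3 × 3` matrix with a `2 × 2` block `W` and lower entry `y`. -/
noncomputable def blockDiag21 (W : Matrix (Fin 2) (Fin 2) ℂ) (y : ℂ) :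
    Matrix (Fin 3) (Fin 3) ℂ :=
  Matrix.of fun i j =>
    if hi : (i : ℕ) < 2 then (if hj : (j : ℕ) < 2 then W ⟨i, hi⟩ ⟨j, hj⟩ else 0)
    else (if (j : ℕ) < 2 then 0 else y)

/-! The entries of `ℂP²` lie in `ℂ`, which `Aut_ℂ(𝕆)` fixes, so on `ℂP²` only the conjugation
`X ↦ Y X Yᴴ` matters and everything reduces to complex linear algebra. A hermitian idempotent of
trace `1` is `v vᴴ` for a unit vector `v`, and `U q Uᴴ = (U e₃)(U e₃)ᴴ`; since every unit vector
is the last column of a special unitary matrix, the orbit of `q` is all of `ℂP²`. A unitary `U`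
fixes `q` iff it commutes with `q`, i.e. is block diagonal `diag(W, y)`, and then
`det U = det W · y = 1` with `|det W| = 1` forces `y = conj (det W)`. -/

namespace Oct

@[ext] lemma ext {x y : Oct} (ha : x.a = y.a) (hb : x.b = y.b) : x = y := by
  cases x; cases y; congr

@[simp] lemma add_a (x y : Oct) : (x + y).a = x.a + y.a := rfl
@[simp] lemma add_b (x y : Oct) : (x + y).b = x.b + y.b := rfl
@[simp] lemma zero_a : (0 : Oct).a = 0 := rfl
@[simp] lemma zero_b : (0 : Oct).b = 0 := rfl
@[simp] lemma one_a : (1 : Oct).a = 1 := rfl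
@[simp] lemma one_b : (1 : Oct).b = 0 := rfl
@[simp] lemma mul_a (x y : Oct) : (x * y).a = x.a * y.a - star y.b * x.b := rfl
@[simp] lemma mul_b (x y : Oct) : (x * y).b = y.b * x.a + x.b * star y.a := rfl
@[simp] lemma star_a (x : Oct) : (star x).a = star x.a := rfl
@[simp] lemma star_b (x : Oct) : (star x).b = -x.b := rfl

end Oct

section ComplexSubfield

open Quaternion

@[simp] lemma embC_a_re (z : ℂ) : (embC z).a.re = z.re := rfl
@[simp] lemma embC_a_imI (z : ℂ) : (embC z).a.imI = z.im := rfl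
@[simp] lemma embC_a_imJ (z : ℂ) : (embC z).a.imJ = 0 := rfl
@[simp] lemma embC_a_imK (z : ℂ) : (embC z).a.imK = 0 := rfl
@[simp] lemma embC_b (z : ℂ) : (embC z).b = 0 := rfl

lemma embC_add (z w : ℂ) : embC (z + w) = embC z + embC w := by
  ext : 2 <;> simp

lemma embC_mul (z w : ℂ) : embC (z * w) = embC z * embC w := by
  ext : 2 <;> simp

@[simp] lemma embC_zero : embC 0 = 0 := by ext : 2 <;> simp
@[simp] lemma embC_one : embC 1 = 1 := by ext : 2 <;> simp

lemma embC_star (z : ℂ) : embC (star z) = star (embC z) := by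
  ext : 2 <;> simp

lemma embC_injective : Function.Injective embC := fun _ _ h =>
  Complex.ext (congrArg (fun o : Oct => o.a.re) h) (congrArg (fun o : Oct => o.a.imI) h)

lemma actAut_embC (Y : Matrix (Fin 3) (Fin 3) ℂ) (z : ℂ) : actAut Y (embC z) = embC z := by
  have hcoords : coords (embC z) = 0 := by
    ext i
    fin_cases i <;> simp [coords, Complex.ext_iff]
  ext : 2 <;> simp [actAut, hcoords, ofCoords, coord0]

end ComplexSubfield

section ComplexMatrices

open Matrix

noncomputable def embCAddHom : ℂ →+ Oct := AddMonoidHom.mk' embC embC_add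

lemma omul3_embCM (A B : Matrix (Fin 3) (Fin 3) ℂ) :
    omul3 (embCM A) (embCM B) = embCM (A * B) := by
  ext i j : 1
  simp only [omul3, embCM, of_apply, mul_apply, ← embC_mul]
  exact (map_sum embCAddHom _ _).symm

lemma otrace_embCM (A : Matrix (Fin 3) (Fin 3) ℂ) : otrace (embCM A) = embC A.trace :=
  (map_sum embCAddHom _ _).symm

lemma embCM_injective : Function.Injective embCM := fun _ _ h =>
  ext fun i j => embC_injective (congrFun₂ h i j)

lemma isOHerm_embCM_iff {A : Matrix (Fin 3) (Fin 3) ℂ} : IsOHerm (embCM A) ↔ IsSelfAdjoint A := by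
  simp only [IsOHerm, embCM, of_apply, ← embC_star, embC_injective.eq_iff]
  exact ⟨fun h => ext fun i j => (h j i).symm, fun h i j => (IsHermitian.apply h j i).symm⟩

lemma embCM_mem_OP2_iff {A : Matrix (Fin 3) (Fin 3) ℂ} :
    embCM A ∈ OP2 ↔ IsStarProjection A ∧ A.trace = 1 := by
  rw [OP2, Set.mem_ofPred_eq, isOHerm_embCM_iff, omul3_embCM, embCM_injective.eq_iff,
    otrace_embCM, ← embC_one, embC_injective.eq_iff, isStarProjection_iff, IsIdempotentElem,
    and_assoc, and_left_comm]

lemma CP2_eq_image_embCM : CP2 = embCM '' {P | IsStarProjection P ∧ P.trace = 1} := by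
  ext X
  constructor
  · rintro ⟨hX, hC⟩
    choose P hP using hC
    have hXP : X = embCM (of P) := ext hP
    exact ⟨of P, embCM_mem_OP2_iff.mp (hXP ▸ hX), hXP.symm⟩
  · rintro ⟨P, hP, rfl⟩
    exact ⟨embCM_mem_OP2_iff.mpr hP, fun i j => ⟨P i j, rfl⟩⟩

lemma cayleyAct_embCM (Y₁ Y₂ A : Matrix (Fin 3) (Fin 3) ℂ) :
    cayleyAct Y₁ Y₂ (embCM A) = embCM (Y₂ * A * Y₂ᴴ) := by
  ext i j : 1
  simp only [cayleyAct, omul3_embCM, of_apply]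
  exact actAut_embC _ _

lemma qProj_eq_embCM : qProj = embCM (single 2 2 1) := by
  ext i j : 1
  simp only [qProj, embCM, of_apply, single_apply, eq_comm (a := (2 : Fin 3))]
  split_ifs <;> simp

end ComplexMatrices

namespace Matrix

variable {n : Type*} [Fintype n]

section CommRing

variable {R : Type*} [CommRing R] [StarRing R]

lemma isStarProjection_vecMulVec_star {v : n → R} (hv : star v ⬝ᵥ v = 1) :
    IsStarProjection (vecMulVec v (star v)) where
  isIdempotentElem := by rw [IsIdempotentElem, vecMulVec_mul_vecMulVec, hv, one_smul]
  isSelfAdjoint := by rw [IsSelfAdjoint, star_eq_conjTranspose, conjTranspose_vecMulVec, star_star]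

lemma trace_vecMulVec_star {v : n → R} (hv : star v ⬝ᵥ v = 1) :
    (vecMulVec v (star v)).trace = 1 := by
  rw [trace_vecMulVec, dotProduct_comm, hv]

lemma star_col_dotProduct_col [DecidableEq n] {U : Matrix n n R} (hU : U ∈ unitaryGroup n R)
    (k : n) : star (U.col k) ⬝ᵥ U.col k = 1 :=
  (congrFun₂ (mem_unitaryGroup_iff'.mp hU) k k).trans (one_apply_eq k)

lemma mul_single_mul_conjTranspose [DecidableEq n] (U : Matrix n n R) (k : n) :
    U * single k k 1 * Uᴴ = vecMulVec (U.col k) (star (U.col k)) := by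
  rw [single_eq_single_vecMulVec_single, mul_vecMulVec, vecMulVec_mul, mulVec_single_one,
    single_one_vecMul]
  rfl

end CommRing

section RCLike

open scoped ComplexOrder

variable {𝕜 : Type*} [RCLike 𝕜]

lemma eq_zero_of_isStarProjection_of_trace_eq_zero {Q : Matrix n n 𝕜} (hQ : IsStarProjection Q)
    (h : Q.trace = 0) : Q = 0 := by
  rwa [← trace_conjTranspose_mul_self_eq_zero_iff, ← star_eq_conjTranspose,
    hQ.isSelfAdjoint.star_eq, hQ.isIdempotentElem.eq]

theorem exists_eq_vecMulVec_of_isStarProjection {P : Matrix n n 𝕜} (hP : IsStarProjection P)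
    (ht : P.trace = 1) : ∃ v : n → 𝕜, star v ⬝ᵥ v = 1 ∧ P = vecMulVec v (star v) := by
  obtain ⟨i, -, hi⟩ := Finset.exists_ne_zero_of_sum_ne_zero (ht.trans_ne one_ne_zero)
  set c : n → 𝕜 := P.col i
  have hPc : P *ᵥ c = c := funext fun j => congrFun₂ hP.isIdempotentElem.eq j i
  have hc : star c ⬝ᵥ c = P i i := by
    simp only [dotProduct, Pi.star_apply, c, col_apply, IsHermitian.apply hP.isSelfAdjoint]
    exact congrFun₂ hP.isIdempotentElem.eq i i
  have hc_pos : 0 < star c ⬝ᵥ c := dotProduct_star_self_pos_iff.mpr (Function.ne_iff.mpr ⟨i, hi⟩)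
  obtain ⟨x, hx, hxc⟩ := RCLike.pos_iff_exists_ofReal.mp (hc ▸ hc_pos)
  set v : n → 𝕜 := ((√x)⁻¹ : ℝ) • c
  have hv : star v ⬝ᵥ v = 1 := by
    simp only [v, star_smul, star_trivial, smul_dotProduct, dotProduct_smul, hc, ← hxc,
      RCLike.real_smul_eq_coe_mul, ← RCLike.ofReal_mul]
    rw [← RCLike.ofReal_one, RCLike.ofReal_inj]
    field_simp
    exact (Real.sq_sqrt hx.le).symm
  -- `P - v vᴴ` is a star projection of trace `0`, hence zero.
  refine ⟨v, hv, sub_eq_zero.mp <| eq_zero_of_isStarProjection_of_trace_eq_zero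
    ((isStarProjection_vecMulVec_star hv).sub_of_mul_eq_right hP ?_) ?_⟩
  · rw [mul_vecMulVec, mulVec_smul, hPc]
  · rw [trace_sub, ht, trace_vecMulVec_star hv, sub_self]

variable [DecidableEq n]

lemma exists_mem_unitaryGroup_col_eq {v : n → 𝕜} (hv : star v ⬝ᵥ v = 1) (k : n) :
    ∃ U ∈ unitaryGroup n 𝕜, U.col k = v := by
  have hsingle : Orthonormal 𝕜 (({k} : Set n).domRestrict fun _ => WithLp.toLp 2 v) := by
    rw [orthonormal_iff_ite]
    rintro ⟨i, rfl⟩ ⟨j, rfl⟩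
    rw [Set.domRestrict_apply, if_pos rfl, EuclideanSpace.inner_eq_star_dotProduct,
      dotProduct_comm, hv]
  obtain ⟨b, hb⟩ := hsingle.exists_orthonormalBasis_extension_of_card_eq (by simp)
  refine ⟨(EuclideanSpace.basisFun n 𝕜).toBasis.toMatrix b.toBasis,
    (EuclideanSpace.basisFun n 𝕜).toMatrix_orthonormalBasis_mem_unitary b, funext fun i => ?_⟩
  change b k i = v i
  rw [hb k rfl]

lemma exists_mem_specialUnitaryGroup_col_eq {v : n → 𝕜} (hv : star v ⬝ᵥ v = 1) {j k : n}
    (hjk : j ≠ k) : ∃ U ∈ specialUnitaryGroup n 𝕜, U.col k = v := by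
  obtain ⟨U, hU, hUk⟩ := exists_mem_unitaryGroup_col_eq hv k
  have hdet : star U.det * U.det = 1 := (det_of_mem_unitary hU).1
  set D : Matrix n n 𝕜 := diagonal (Pi.mulSingle j (star U.det))
  have hD : D ∈ unitaryGroup n 𝕜 := by
    rw [mem_unitaryGroup_iff, star_eq_conjTranspose, diagonal_conjTranspose,
      diagonal_mul_diagonal, ← diagonal_one]
    congr 1
    ext i
    rcases eq_or_ne i j with rfl | hij
    · simpa [mul_comm] using hdet
    · simp [hij]
  refine ⟨U * D, mem_specialUnitaryGroup_iff.mpr ⟨mul_mem hU hD, ?_⟩, ?_⟩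
  · rw [det_mul, det_diagonal, Fintype.prod_pi_mulSingle', mul_comm, hdet]
  · ext i
    rw [col_apply, mul_diagonal, Pi.mulSingle_eq_of_ne hjk.symm, mul_one]
    exact congrFun hUk i

theorem setOf_isStarProjection_trace_eq_one {j k : n} (hjk : j ≠ k) :
    {P : Matrix n n 𝕜 | IsStarProjection P ∧ P.trace = 1} =
      (fun U => U * single k k 1 * Uᴴ) '' specialUnitaryGroup n 𝕜 := by
  ext P
  constructor
  · rintro ⟨hP, ht⟩
    obtain ⟨v, hv, rfl⟩ := exists_eq_vecMulVec_of_isStarProjection hP ht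
    obtain ⟨U, hU, hUv⟩ := exists_mem_specialUnitaryGroup_col_eq hv hjk
    exact ⟨U, hU, hUv ▸ mul_single_mul_conjTranspose U k⟩
  · rintro ⟨U, hU, rfl⟩
    have hcol := star_col_dotProduct_col (mem_specialUnitaryGroup_iff.mp hU).1 k
    simp only [Set.mem_ofPred_eq, mul_single_mul_conjTranspose]
    exact ⟨isStarProjection_vecMulVec_star hcol, trace_vecMulVec_star hcol⟩

end RCLike

end Matrix

section BlockDiagonal

open Matrix

variable {W W' : Matrix (Fin 2) (Fin 2) ℂ} {y y' : ℂ}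

lemma blockDiag21_mul : blockDiag21 W y * blockDiag21 W' y' = blockDiag21 (W * W') (y * y') := by
  ext i j
  fin_cases i <;> fin_cases j <;> simp [blockDiag21, mul_apply, Fin.sum_univ_succ]

lemma conjTranspose_blockDiag21 : (blockDiag21 W y)ᴴ = blockDiag21 Wᴴ (star y) := by
  ext i j
  fin_cases i <;> fin_cases j <;> simp [blockDiag21]

lemma blockDiag21_one : blockDiag21 1 1 = 1 := by
  ext i j
  fin_cases i <;> fin_cases j <;> simp [blockDiag21]

lemma blockDiag21_inj : blockDiag21 W y = blockDiag21 W' y' ↔ W = W' ∧ y = y' := by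
  refine ⟨fun h => ⟨ext fun i j => ?_, congrFun₂ h 2 2⟩, fun h => h.1 ▸ h.2 ▸ rfl⟩
  simpa [blockDiag21, Fin.is_le] using congrFun₂ h i.castSucc j.castSucc

lemma det_blockDiag21 : (blockDiag21 W y).det = W.det * y := by
  simp [blockDiag21, det_fin_three, det_fin_two, sub_mul]

lemma blockDiag21_mem_unitaryGroup_iff :
    blockDiag21 W y ∈ unitaryGroup (Fin 3) ℂ ↔ W ∈ unitaryGroup (Fin 2) ℂ ∧ star y * y = 1 := by
  rw [mem_unitaryGroup_iff', mem_unitaryGroup_iff', star_eq_conjTranspose, star_eq_conjTranspose,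
    conjTranspose_blockDiag21, blockDiag21_mul, ← blockDiag21_one, blockDiag21_inj]

lemma blockDiag21_mem_specialUnitaryGroup_iff :
    blockDiag21 W y ∈ specialUnitaryGroup (Fin 3) ℂ ↔
      W ∈ unitaryGroup (Fin 2) ℂ ∧ y = star W.det := by
  rw [mem_specialUnitaryGroup_iff, blockDiag21_mem_unitaryGroup_iff, det_blockDiag21]
  constructor
  · rintro ⟨⟨hW, -⟩, hdet⟩
    refine ⟨hW, ?_⟩
    calc y = (star W.det * W.det) * y := by rw [(det_of_mem_unitary hW).1, one_mul]
      _ = star W.det := by rw [mul_assoc, hdet, mul_one]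
  · rintro ⟨hW, rfl⟩
    have hdet : W.det * star W.det = 1 := (det_of_mem_unitary hW).2
    exact ⟨⟨hW, by rw [star_star, hdet]⟩, hdet⟩

lemma commute_blockDiag21_single : Commute (blockDiag21 W y) (single 2 2 1) := by
  ext i j
  fin_cases i <;> fin_cases j <;> simp [blockDiag21, mul_apply, Fin.sum_univ_succ, single_apply]

lemma eq_blockDiag21_of_commute_single {Y : Matrix (Fin 3) (Fin 3) ℂ}
    (hY : Commute Y (single 2 2 1)) :
    Y = blockDiag21 (Y.submatrix Fin.castSucc Fin.castSucc) (Y 2 2) := by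
  ext i j
  have h := congrFun₂ hY.eq i j
  fin_cases i <;> fin_cases j <;> simp_all [blockDiag21, mul_apply, single_apply]

lemma mem_specialUnitaryGroup_and_commute_single_iff {Y : Matrix (Fin 3) (Fin 3) ℂ} :
    Y ∈ specialUnitaryGroup (Fin 3) ℂ ∧ Commute Y (single 2 2 1) ↔
      ∃ W ∈ unitaryGroup (Fin 2) ℂ, Y = blockDiag21 W (star W.det) := by
  constructor
  · rintro ⟨hY, hc⟩
    have hYW := eq_blockDiag21_of_commute_single hc
    obtain ⟨hW, hy⟩ := blockDiag21_mem_specialUnitaryGroup_iff.mp (hYW ▸ hY)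
    exact ⟨_, hW, hYW.trans (by rw [← hy])⟩
  · rintro ⟨W, hW, rfl⟩
    exact ⟨blockDiag21_mem_specialUnitaryGroup_iff.mpr ⟨hW, rfl⟩, commute_blockDiag21_single⟩

end BlockDiagonal

section CayleyPlane

open Matrix

lemma cayleyAct_qProj (Y₁ Y₂ : Matrix (Fin 3) (Fin 3) ℂ) :
    cayleyAct Y₁ Y₂ qProj = embCM (Y₂ * single 2 2 1 * Y₂ᴴ) := by
  rw [qProj_eq_embCM, cayleyAct_embCM]

lemma cayleyAct_qProj_eq_qProj_iff {Y₁ Y₂ : Matrix (Fin 3) (Fin 3) ℂ}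
    (hY₂ : Y₂ ∈ unitaryGroup (Fin 3) ℂ) :
    cayleyAct Y₁ Y₂ qProj = qProj ↔ Commute Y₂ (single 2 2 1) := by
  rw [cayleyAct_qProj, qProj_eq_embCM, embCM_injective.eq_iff, ← star_eq_conjTranspose,
    commute_unitary_iff_star_right_conjugate hY₂]

end CayleyPlane

/-- For the action of `K = SU(3) × SU(3)` on the Cayley plane `OP²`
(first factor acting entrywise as `Aut_ℂ(𝕆)`, second factor by conjugation), the orbit
of the projector `q = diag(0,0,1)` is the complex projective plane `ℂP² ⊆ OP²`, and the
stabilizer `K_q ≅ SU(3) × U(2)` consists of the pairs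
`(Y₁, diag-block(Y₂, conj (det Y₂)))` with `Y₁ ∈ SU(3)`, `Y₂ ∈ U(2)`. -/
theorem statement19 :
    {X : Matrix (Fin 3) (Fin 3) Oct |
        ∃ Y₁ ∈ Matrix.specialUnitaryGroup (Fin 3) ℂ,
        ∃ Y₂ ∈ Matrix.specialUnitaryGroup (Fin 3) ℂ,
          X = cayleyAct Y₁ Y₂ qProj} = CP2 ∧
    {p : Matrix (Fin 3) (Fin 3) ℂ × Matrix (Fin 3) (Fin 3) ℂ |
        p.1 ∈ Matrix.specialUnitaryGroup (Fin 3) ℂ ∧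
        p.2 ∈ Matrix.specialUnitaryGroup (Fin 3) ℂ ∧
        cayleyAct p.1 p.2 qProj = qProj} =
      {p : Matrix (Fin 3) (Fin 3) ℂ × Matrix (Fin 3) (Fin 3) ℂ |
        p.1 ∈ Matrix.specialUnitaryGroup (Fin 3) ℂ ∧
        ∃ W ∈ Matrix.unitaryGroup (Fin 2) ℂ, p.2 = blockDiag21 W (star W.det)} := by
  constructor
  · rw [CP2_eq_image_embCM,
      Matrix.setOf_isStarProjection_trace_eq_one (j := 0) (k := 2) (by decide), Set.image_image]
    ext X
    simp only [Set.mem_ofPred_eq, Set.mem_image, cayleyAct_qProj]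
    constructor
    · rintro ⟨Y₁, -, Y₂, hY₂, rfl⟩
      exact ⟨Y₂, hY₂, rfl⟩
    · rintro ⟨Y₂, hY₂, rfl⟩
      exact ⟨1, one_mem _, Y₂, hY₂, rfl⟩
  · ext ⟨Y₁, Y₂⟩
    simp only [Set.mem_ofPred_eq, ← mem_specialUnitaryGroup_and_commute_single_iff]
    refine and_congr_right fun _ => and_congr_right fun hY₂ => ?_
    exact cayleyAct_qProj_eq_qProj_iff (Matrix.mem_specialUnitaryGroup_iff.mp hY₂).1
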